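/- arXiv:1709.06170 — 4 statements merged into one kernel-verified Lean document; each statement's English description precedes it below -/
import Mathlib

section
/- (Obverse induction principle.) Let P be a dcpo, let G be a set of preclosure maps on P, and let h be the closure operator on P sending each x to the least common fixed point of G above x. If a subset A of P is inaccessible by directed joins (every nonempty directed subset D of P whose least upper bound lies in A intersects A) and is inversely closed under G (for every g ∈ G and x ∈ P, g(x) ∈ A implies x ∈ A), then A is inversely closed under h: for every x ∈ P, h(x) ∈ A implies x ∈ A. -/
/-- A dcpo: every nonempty directed subset has a least upper bound. -/
def IsDcpo (P : Type*) [PartialOrder P] : Prop :=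
  ∀ D : Set P, D.Nonempty → DirectedOn (· ≤ ·) D → ∃ s, IsLUB D s

/-- A preclosure map: monotone and inflationary. -/
def IsPreclosure {P : Type*} [PartialOrder P] (f : P → P) : Prop :=
  Monotone f ∧ ∀ x, x ≤ f x

/-- Common fixed points of a set of maps. -/
def FixSet {P : Type*} (G : Set (P → P)) : Set P := {x | ∀ g ∈ G, g x = x}

/-!
Let `T` be the least set containing `x` that is closed under every `g ∈ G` and under directed
joins. It lies below `h x`, and by Zorn's lemma (chains are directed) it has a maximal element
above `x`, which every inflationary `g ∈ G` must fix; hence `h x ∈ T`. If `x ∉ A`, then `Aᶜ` is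
one of the sets whose intersection is `T`, so `h x ∉ A`.
-/

open Set

section DirOrbit

variable {P : Type*} [PartialOrder P]

lemma DirSupClosed.exists_le_maximal (hP : IsDcpo P) {S : Set P} (hS : DirSupClosed S)
    {x : P} (hx : x ∈ S) : ∃ m, x ≤ m ∧ Maximal (· ∈ S) m :=
  zorn_le_nonempty₀ S (fun c hcS hc y hy => by
    obtain ⟨s, hs⟩ := hP c ⟨y, hy⟩ hc.directedOn
    exact ⟨s, hS hcS ⟨y, hy⟩ hc.directedOn hs, hs.1⟩) x hx

lemma Maximal.mem_fixSet {G : Set (P → P)} (hG : ∀ g ∈ G, ∀ y, y ≤ g y) {S : Set P}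
    (hGS : ∀ g ∈ G, MapsTo g S S) {m : P} (hm : Maximal (· ∈ S) m) : m ∈ FixSet G :=
  fun g hg => le_antisymm (hm.2 (hGS g hg hm.1) (hG g hg m)) (hG g hg m)

def dirOrbit (G : Set (P → P)) (x : P) : Set P :=
  ⋂₀ {S | x ∈ S ∧ (∀ g ∈ G, MapsTo g S S) ∧ DirSupClosed S}

lemma mem_dirOrbit_self (G : Set (P → P)) (x : P) : x ∈ dirOrbit G x :=
  fun _ hS => hS.1

variable {G : Set (P → P)} {x : P}

lemma mapsTo_dirOrbit {g : P → P} (hg : g ∈ G) : MapsTo g (dirOrbit G x) (dirOrbit G x) :=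
  fun _ hy S hS => hS.2.1 g hg (hy S hS)

lemma dirSupClosed_dirOrbit : DirSupClosed (dirOrbit G x) :=
  DirSupClosed.sInter fun _ hS => hS.2.2

lemma dirOrbit_subset {S : Set P} (hx : x ∈ S) (hGS : ∀ g ∈ G, MapsTo g S S)
    (hS : DirSupClosed S) : dirOrbit G x ⊆ S :=
  sInter_subset_of_mem ⟨hx, hGS, hS⟩

lemma mem_dirOrbit_of_isLeast (hP : IsDcpo P) (hG : ∀ g ∈ G, IsPreclosure g) {z : P}
    (hz : IsLeast {y | y ∈ FixSet G ∧ x ≤ y} z) : z ∈ dirOrbit G x := by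
  have hle : dirOrbit G x ⊆ Iic z :=
    dirOrbit_subset hz.1.2
      (fun g hg y (hy : y ≤ z) => ((hG g hg).1 hy).trans_eq (hz.1.1 g hg))
      (dirSupClosed_Iic z)
  obtain ⟨m, hxm, hm⟩ := dirSupClosed_dirOrbit.exists_le_maximal hP (mem_dirOrbit_self G x)
  have hm_fix : m ∈ FixSet G :=
    hm.mem_fixSet (fun g hg => (hG g hg).2) (fun _ hg => mapsTo_dirOrbit hg)
  exact le_antisymm (hz.2 ⟨hm_fix, hxm⟩) (hle hm.1) ▸ hm.1

end DirOrbit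

theorem stmt2 {P : Type*} [PartialOrder P] (hP : IsDcpo P)
    (G : Set (P → P)) (hG : ∀ g ∈ G, IsPreclosure g)
    (h : P → P) (hh : ∀ x, IsLeast {y | y ∈ FixSet G ∧ x ≤ y} (h x))
    (A : Set P)
    (hinacc : ∀ D : Set P, D.Nonempty → DirectedOn (· ≤ ·) D →
      ∀ s, IsLUB D s → s ∈ A → (D ∩ A).Nonempty)
    (hinv : ∀ g ∈ G, ∀ x : P, g x ∈ A → x ∈ A) :
    ∀ x : P, h x ∈ A → x ∈ A := by
  intro x hxA
  by_contra hx
  have hA : DirSupClosed Aᶜ :=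
    dirSupClosed_compl.2 fun d hd hdir s hs hsA => hinacc d hd hdir s hs hsA
  have hsub : dirOrbit G x ⊆ Aᶜ :=
    dirOrbit_subset hx (fun g hg y hy hgy => hy (hinv g hg y hgy)) hA
  exact hsub (mem_dirOrbit_of_isLeast hP hG (hh x)) hxA
end

section
/- Let g be a Scott-continuous preclosure map on a dcpo P. Then for every x ∈ P the set {g^n(x) | n ∈ ℕ} of iterates has a least upper bound; the function h defined by h(x) = ⋁{g^n(x) | n ∈ ℕ} is a Scott-continuous closure operator on P with Fix(h) = Fix(g); and h is the least of all closure operators on P above g. -/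
/-- A closure operator: monotone, inflationary, idempotent. -/
def IsClosureOp {P : Type*} [PartialOrder P] (f : P → P) : Prop :=
  Monotone f ∧ (∀ x, x ≤ f x) ∧ ∀ x, f (f x) = f x

/-- Scott continuity. -/
def IsScottContinuous {P Q : Type*} [PartialOrder P] [PartialOrder Q]
    (f : P → Q) : Prop :=
  ∀ D : Set P, D.Nonempty → DirectedOn (· ≤ ·) D → ∀ s, IsLUB D s → IsLUB (f '' D) (f s)

open Function Set

lemma isScottContinuous_iff_scottContinuous {P Q : Type*} [PartialOrder P] [PartialOrder Q]
    {f : P → Q} : IsScottContinuous f ↔ ScottContinuous f :=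
  ⟨fun hf _ hne hdir _ hs => hf _ hne hdir _ hs, fun hf _ hne hdir _ hs => hf hne hdir hs⟩

lemma ScottContinuous.iterate {P : Type*} [PartialOrder P] {g : P → P}
    (hg : ScottContinuous g) (n : ℕ) : ScottContinuous g^[n] := by
  induction n with
  | zero => exact ScottContinuous.id
  | succ n ih => rw [iterate_succ']; exact ih.comp hg

section IterateSup

variable {P : Type*} [PartialOrder P] {g h : P → P}

lemma directedOn_range_iterate (hg : id ≤ g) (x : P) :
    DirectedOn (· ≤ ·) (range fun n => g^[n] x) :=
  (Monotone.directed_le fun _ _ hmn => monotone_iterate_of_id_le hg hmn x).directedOn_range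

lemma IsDcpo.exists_isLUB_range_iterate (hP : IsDcpo P) (hg : id ≤ g) (x : P) :
    ∃ s, IsLUB (range fun n => g^[n] x) s :=
  hP _ (range_nonempty _) (directedOn_range_iterate hg x)

variable (hh : ∀ x, IsLUB (range fun n => g^[n] x) (h x))
include hh

lemma le_of_isLUB_range_iterate (x : P) : x ≤ h x :=
  (hh x).1 ⟨0, rfl⟩

lemma monotone_of_isLUB_range_iterate (hg : Monotone g) : Monotone h := fun x y hxy =>
  (hh x).2 <| forall_mem_range.2 fun n => (hg.iterate n hxy).trans ((hh y).1 ⟨n, rfl⟩)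

lemma isFixedPt_of_isLUB_range_iterate (hg : id ≤ g) (hgc : ScottContinuous g) (x : P) :
    IsFixedPt g (h x) := by
  have hlub := hgc (range_nonempty _) (directedOn_range_iterate hg x) (hh x)
  refine le_antisymm (hlub.2 ?_) (hg _)
  rintro _ ⟨_, ⟨n, rfl⟩, rfl⟩
  exact (hh x).1 ⟨n + 1, iterate_succ_apply' g n x⟩

lemma eq_of_isLUB_range_iterate_of_isFixedPt {x : P} (hx : IsFixedPt g x) : h x = x := by
  refine (hh x).unique ?_
  convert isLUB_singleton (a := x)
  exact range_eq_singleton_iff.2 fun n => (hx.iterate n).eq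

lemma scottContinuous_of_isLUB_range_iterate (hgc : ScottContinuous g) : ScottContinuous h := by
  intro D hne hdir s hs
  refine ⟨?_, fun u hu => (hh s).2 <| forall_mem_range.2 fun n => ?_⟩
  · rintro _ ⟨d, hd, rfl⟩
    exact monotone_of_isLUB_range_iterate hh hgc.monotone (hs.1 hd)
  · refine ((hgc.iterate n) hne hdir hs).2 ?_
    rintro _ ⟨d, hd, rfl⟩
    exact ((hh d).1 ⟨n, rfl⟩).trans (hu ⟨d, hd, rfl⟩)

end IterateSup

theorem stmt9 {P : Type*} [PartialOrder P] (hP : IsDcpo P)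
    (g : P → P) (hg : IsPreclosure g) (hgsc : IsScottContinuous g) :
    (∀ x : P, ∃ s, IsLUB {y | ∃ n : ℕ, g^[n] x = y} s) ∧
    ∀ h : P → P, (∀ x, IsLUB {y | ∃ n : ℕ, g^[n] x = y} (h x)) →
      IsClosureOp h ∧ IsScottContinuous h ∧
      {x | h x = x} = {x | g x = x} ∧
      ∀ k : P → P, IsClosureOp k → (∀ x, g x ≤ k x) → ∀ x, h x ≤ k x := by
  obtain ⟨hgm, hgi⟩ := hg
  rw [isScottContinuous_iff_scottContinuous] at hgsc
  refine ⟨hP.exists_isLUB_range_iterate hgi, fun h hh => ?_⟩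
  have hmono := monotone_of_isLUB_range_iterate hh hgm
  have hfix := isFixedPt_of_isLUB_range_iterate hh hgi hgsc
  have hfix_of {x} (hx : IsFixedPt g x) : h x = x := eq_of_isLUB_range_iterate_of_isFixedPt hh hx
  refine ⟨⟨hmono, le_of_isLUB_range_iterate hh, fun x => hfix_of (hfix x)⟩,
    isScottContinuous_iff_scottContinuous.2 (scottContinuous_of_isLUB_range_iterate hh hgsc),
    ?_, ?_⟩
  · ext x
    exact ⟨fun hx => hx ▸ hfix x, hfix_of⟩
  · rintro k ⟨-, hk, hkk⟩ hgk x
    have hkx : IsFixedPt g (k x) := le_antisymm ((hgk _).trans (hkk x).le) (hgi _)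
    calc h x ≤ h (k x) := hmono (hk x)
      _ = k x := hfix_of hkx
end

section
/- Let P be a preframe and let Γ be a set of prenuclei on P. Then the set Fix(Γ) of common fixed points of Γ is a closure system in P, and the closure operator δ sending each x ∈ P to the least common fixed point of Γ above x preserves binary meets: δ(x ⊓ y) = δ(x) ⊓ δ(y) for all x, y ∈ P. Hence the least closure operator above a set of prenuclei on a preframe is a nucleus; in particular, the join in the complete lattice of closure operators of any set of nuclei on P is a nucleus. -/
/-- A preframe: a meet-semilattice which is a dcpo and in which binary meets
distribute over directed joins. -/
def IsPreframe (P : Type*) [SemilatticeInf P] : Prop :=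
  IsDcpo P ∧ ∀ (x : P) (D : Set P), D.Nonempty → DirectedOn (· ≤ ·) D →
    ∀ s, IsLUB D s → IsLUB ((fun d => x ⊓ d) '' D) (x ⊓ s)

/-- A closure system: every element has a least element of the system above it. -/
def IsClosureSystem {P : Type*} [PartialOrder P] (C : Set P) : Prop :=
  ∀ x : P, ∃ m, IsLeast {y | y ∈ C ∧ x ≤ y} m

/-- A prenucleus: a monotone inflationary map preserving binary meets. -/
def IsPrenucleus {P : Type*} [SemilatticeInf P] (f : P → P) : Prop :=
  Monotone f ∧ (∀ x, x ≤ f x) ∧ ∀ x y, f (x ⊓ y) = f x ⊓ f y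

/-!
The prenuclei on `P` that fix every common fixed point of `Γ` contain the identity and are
closed under composition, so they form a directed family; in a preframe its pointwise
directed join `d` is again such a prenucleus, hence the largest one. Since `γ ∘ d` belongs to
the family for every `γ ∈ Γ`, each `d x` is a common fixed point, and as `d` is inflationary,
monotone and fixes `Fix(Γ)`, `d x` is the least one above `x`. So the closure operator is `d`,
which preserves binary meets.
-/

section Prenucleus

variable {P : Type*} [SemilatticeInf P] {f g : P → P}

theorem isPrenucleus_id : IsPrenucleus (id : P → P) :=
  ⟨monotone_id, fun _ => le_rfl, fun _ _ => rfl⟩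

theorem IsPrenucleus.comp (hf : IsPrenucleus f) (hg : IsPrenucleus g) : IsPrenucleus (f ∘ g) :=
  ⟨hf.1.comp hg.1, fun x => (hg.2.1 x).trans (hf.2.1 _), fun x y => by
    simp only [Function.comp_apply, hg.2.2, hf.2.2]⟩

theorem IsPrenucleus.le_comp_left (hf : IsPrenucleus f) (hg : IsPrenucleus g) : f ≤ f ∘ g :=
  fun x => hf.1 (hg.2.1 x)

theorem IsPrenucleus.le_comp_right (hf : IsPrenucleus f) : g ≤ f ∘ g :=
  fun x => hf.2.1 (g x)

end Prenucleus

theorem IsDcpo.pi {ι P : Type*} [PartialOrder P] (hP : IsDcpo P) : IsDcpo (ι → P) := by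
  intro D hne hdir
  choose s hs using fun i =>
    hP _ (hne.image (Function.eval i)) (hdir.mono_comp fun _ _ hfg => hfg i)
  exact ⟨s, isLUB_pi.2 hs⟩

namespace IsPreframe

variable {P : Type*} [SemilatticeInf P]

theorem inf_le_of_isLUB (hP : IsPreframe P) {A B : Set P} {a b c : P}
    (hA : IsLUB A a) (hAne : A.Nonempty) (hAdir : DirectedOn (· ≤ ·) A)
    (hB : IsLUB B b) (hBne : B.Nonempty) (hBdir : DirectedOn (· ≤ ·) B)
    (h : ∀ a' ∈ A, ∀ b' ∈ B, a' ⊓ b' ≤ c) : a ⊓ b ≤ c := by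
  refine (hP.2 a B hBne hBdir b hB).2 ?_
  rintro _ ⟨b', hb', rfl⟩
  show a ⊓ b' ≤ c
  rw [inf_comm]
  refine (hP.2 b' A hAne hAdir a hA).2 ?_
  rintro _ ⟨a', ha', rfl⟩
  show b' ⊓ a' ≤ c
  rw [inf_comm]
  exact h a' ha' b' hb'

theorem isPrenucleus_of_isLUB (hP : IsPreframe P) {D : Set (P → P)} {d : P → P}
    (hD : ∀ f ∈ D, IsPrenucleus f) (hne : D.Nonempty) (hdir : DirectedOn (· ≤ ·) D)
    (hd : IsLUB D d) : IsPrenucleus d := by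
  have hev : ∀ x, IsLUB (Function.eval x '' D) (d x) := isLUB_pi.1 hd
  have hev_dir : ∀ x, DirectedOn (· ≤ ·) (Function.eval x '' D) :=
    fun x => hdir.mono_comp fun _ _ hfg => hfg x
  have hmono : Monotone d := fun x y hxy => (hev x).2 <| by
    rintro _ ⟨f, hf, rfl⟩
    exact ((hD f hf).1 hxy).trans (hd.1 hf y)
  obtain ⟨f₀, hf₀⟩ := hne
  refine ⟨hmono, fun x => ((hD f₀ hf₀).2.1 x).trans (hd.1 hf₀ x), fun x y =>
    le_antisymm (le_inf (hmono inf_le_left) (hmono inf_le_right)) ?_⟩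
  refine hP.inf_le_of_isLUB (hev x) ⟨_, f₀, hf₀, rfl⟩ (hev_dir x)
    (hev y) ⟨_, f₀, hf₀, rfl⟩ (hev_dir y) ?_
  rintro _ ⟨f, hf, rfl⟩ _ ⟨g, hg, rfl⟩
  obtain ⟨k, hk, hfk, hgk⟩ := hdir f hf g hg
  calc f x ⊓ g y ≤ k x ⊓ k y := inf_le_inf (hfk x) (hgk y)
    _ = k (x ⊓ y) := ((hD k hk).2.2 x y).symm
    _ ≤ d (x ⊓ y) := hd.1 hk (x ⊓ y)

end IsPreframe

section FixSet

variable {P : Type*} [SemilatticeInf P] {Γ : Set (P → P)}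

def prenucleiFixing (Γ : Set (P → P)) : Set (P → P) :=
  {f | IsPrenucleus f ∧ ∀ y ∈ FixSet Γ, f y = y}

theorem directedOn_prenucleiFixing : DirectedOn (· ≤ ·) (prenucleiFixing Γ) :=
  fun f hf g hg => ⟨f ∘ g, ⟨hf.1.comp hg.1, fun y hy => by simp [hg.2 y hy, hf.2 y hy]⟩,
    hf.1.le_comp_left hg.1, hf.1.le_comp_right⟩

theorem IsPreframe.exists_isGreatest_prenucleiFixing (hP : IsPreframe P) (Γ : Set (P → P)) :
    ∃ d, IsGreatest (prenucleiFixing Γ) d := by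
  have hne : (prenucleiFixing Γ).Nonempty := ⟨id, isPrenucleus_id, fun _ _ => rfl⟩
  obtain ⟨d, hd⟩ := hP.1.pi _ hne directedOn_prenucleiFixing
  have hpre : IsPrenucleus d :=
    hP.isPrenucleus_of_isLUB (fun f hf => hf.1) hne directedOn_prenucleiFixing hd
  refine ⟨d, ⟨hpre, fun y hy => le_antisymm ?_ (hpre.2.1 y)⟩, hd.1⟩
  refine (isLUB_pi.1 hd y).2 ?_
  rintro _ ⟨f, hf, rfl⟩
  exact (hf.2 y hy).le

theorem isLeast_fixSet_of_isGreatest (hΓ : ∀ γ ∈ Γ, IsPrenucleus γ) {d : P → P}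
    (hd : IsGreatest (prenucleiFixing Γ) d) (x : P) :
    IsLeast {y | y ∈ FixSet Γ ∧ x ≤ y} (d x) := by
  obtain ⟨⟨hpre, hfix⟩, hmax⟩ := hd
  have hγd : ∀ γ ∈ Γ, γ ∘ d ∈ prenucleiFixing Γ := fun γ hγ =>
    ⟨(hΓ γ hγ).comp hpre, fun y hy => by simp [hfix y hy, hy γ hγ]⟩
  refine ⟨⟨fun γ hγ => le_antisymm (hmax (hγd γ hγ) x) ((hΓ γ hγ).2.1 _), hpre.2.1 x⟩, ?_⟩
  rintro y ⟨hy, hxy⟩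
  exact (hpre.1 hxy).trans (hfix y hy).le

end FixSet

theorem stmt14 {P : Type*} [SemilatticeInf P] (hP : IsPreframe P)
    (Γ : Set (P → P)) (hΓ : ∀ γ ∈ Γ, IsPrenucleus γ) :
    IsClosureSystem (FixSet Γ) ∧
    ∀ δ : P → P, (∀ x, IsLeast {y | y ∈ FixSet Γ ∧ x ≤ y} (δ x)) →
      ∀ x y : P, δ (x ⊓ y) = δ x ⊓ δ y := by
  obtain ⟨d, hd⟩ := hP.exists_isGreatest_prenucleiFixing Γ
  have hleast := isLeast_fixSet_of_isGreatest hΓ hd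
  refine ⟨fun x => ⟨d x, hleast x⟩, fun δ hδ x y => ?_⟩
  have hδd : δ = d := funext fun z => (hδ z).unique (hleast z)
  rw [hδd]
  exact hd.1.1.2.2 x y
end

section
/- Let P be a default-enabled poset and let G be a set of preclosure maps on P. Then the set Fix(G) of common fixed points of G is a closure system in P, and the map sending each x ∈ P to the least element of {y ∈ Fix(G) | x ≤ y} is a closure operator on P which is the least closure operator on P lying pointwise above every map in G. -/
/-- A default-enabled poset: every lower bound of any subset lies below
some maximal lower bound of that subset. -/
def DefaultEnabled (P : Type*) [PartialOrder P] : Prop :=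
  ∀ X : Set P, ∀ b ∈ lowerBounds X, ∃ m ∈ lowerBounds X, b ≤ m ∧
    ∀ m' ∈ lowerBounds X, m ≤ m' → m' = m

/-! A maximal lower bound `m` of a set of common fixed points is itself a common fixed point:
each `g ∈ G` maps it to another lower bound `g m ≥ m`, so `g m = m` by maximality. In a
default-enabled poset the set of fixed points above `x` has a maximal lower bound above `x`,
which is then its least element. The resulting map is a closure operator, and any closure
operator `k` above `G` takes values in `Fix(G)`, which puts it above the least-fixed-point map. -/

section

variable {P : Type*} [PartialOrder P] {G : Set (P → P)}

theorem mem_fixSet_of_mem_lowerBounds_of_maximal (hG : ∀ g ∈ G, IsPreclosure g) {X : Set P}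
    (hX : X ⊆ FixSet G) {m : P} (hm : m ∈ lowerBounds X)
    (hmax : ∀ m' ∈ lowerBounds X, m ≤ m' → m' = m) : m ∈ FixSet G := by
  intro g hg
  have hgm : g m ∈ lowerBounds X := fun y hy =>
    calc g m ≤ g y := (hG g hg).1 (hm hy)
      _ = y := hX hy g hg
  exact hmax (g m) hgm ((hG g hg).2 m)

theorem DefaultEnabled.exists_isLeast_fixSet (hP : DefaultEnabled P)
    (hG : ∀ g ∈ G, IsPreclosure g) (x : P) :
    ∃ m, IsLeast {y | y ∈ FixSet G ∧ x ≤ y} m := by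
  obtain ⟨m, hm, hxm, hmax⟩ := hP {y | y ∈ FixSet G ∧ x ≤ y} x fun _ hy => hy.2
  exact ⟨m, ⟨mem_fixSet_of_mem_lowerBounds_of_maximal hG (fun _ hy => hy.1) hm hmax, hxm⟩, hm⟩

theorem isClosureOp_of_isLeast {C : Set P} {h : P → P}
    (hh : ∀ x, IsLeast {y | y ∈ C ∧ x ≤ y} (h x)) : IsClosureOp h := by
  have hmem : ∀ x, h x ∈ C := fun x => (hh x).1.1
  have hle : ∀ x, x ≤ h x := fun x => (hh x).1.2
  refine ⟨fun a b hab => (hh a).2 ⟨hmem b, hab.trans (hle b)⟩, hle, fun x => ?_⟩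
  exact le_antisymm ((hh (h x)).2 ⟨hmem x, le_rfl⟩) (hle (h x))

theorem apply_le_of_mem_fixSet {g : P → P} (hg : g ∈ G) (hmono : Monotone g) {x y : P}
    (hxy : x ≤ y) (hy : y ∈ FixSet G) : g x ≤ y :=
  (hmono hxy).trans_eq (hy g hg)

theorem IsClosureOp.apply_mem_fixSet {k : P → P} (hk : IsClosureOp k)
    (hG : ∀ g ∈ G, IsPreclosure g) (hGk : ∀ g ∈ G, ∀ x, g x ≤ k x) (x : P) :
    k x ∈ FixSet G := fun g hg =>
  le_antisymm ((hGk g hg (k x)).trans_eq (hk.2.2 x)) ((hG g hg).2 (k x))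

end

theorem stmt18 {P : Type*} [PartialOrder P] (hP : DefaultEnabled P)
    (G : Set (P → P)) (hG : ∀ g ∈ G, IsPreclosure g) :
    (∀ x : P, ∃ m, IsLeast {y | y ∈ FixSet G ∧ x ≤ y} m) ∧
    ∀ h : P → P, (∀ x, IsLeast {y | y ∈ FixSet G ∧ x ≤ y} (h x)) →
      IsClosureOp h ∧ (∀ g ∈ G, ∀ x, g x ≤ h x) ∧
      ∀ k : P → P, IsClosureOp k → (∀ g ∈ G, ∀ x, g x ≤ k x) → ∀ x, h x ≤ k x := by
  refine ⟨hP.exists_isLeast_fixSet hG, fun h hh => ⟨isClosureOp_of_isLeast hh, ?_, ?_⟩⟩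
  · exact fun g hg x => apply_le_of_mem_fixSet hg (hG g hg).1 (hh x).1.2 (hh x).1.1
  · exact fun k hk hGk x => (hh x).2 ⟨hk.apply_mem_fixSet hG hGk x, hk.2.1 x⟩
end
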